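/- arXiv:1912.04323 — 2 statements merged into one kernel-verified Lean document; each statement's English description precedes it below -/
import Mathlib

section
/- Let v : [0,T]×D → ℝ^m be Lipschitz continuous, let f ∈ C¹(ℝ^m;ℝ^m), let η ∈ C¹(ℝ^m;ℝ) and q ∈ C¹(ℝ^m;ℝ) satisfy Dq = Dη·Df, and set R := ∂_t v + ∂_x f(v) (defined a.e.). Then for every φ ∈ C^∞([0,T);ℝ) with compact support in [0,T): ∫_0^T ∫_D η(v(t,x)) φ'(t) dx dt + ∫_0^T ∫_D ( Dη(v(t,x)) · R(t,x) ) φ(t) dx dt + ∫_D η(v(0,x)) φ(0) dx = 0. -/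
/-!
By the chain rule and `Dq = Dη·Df`, at almost every point `Dη(v)·R = ∂ₜη(v) + ∂ₓq(v)`; identifying
`∂ₓq(v)` needs `v(t,·)` to be differentiable at `x`, which Rademacher's theorem provides for
almost every `x`. In each time slice the flux term integrates to `q(v(t,1)) - q(v(t,0)) = 0` by
periodicity. After Fubini, the remaining terms integrate in time to
`η(v(T,x))φ(T) - η(v(0,x))φ(0) = -η(v(0,x))φ(0)`. Both steps are the fundamental theorem of calculus
for absolutely continuous functions. Extending `v` constantly in time outside `[0,T]` makes it
globally Lipschitz, which gives the joint measurability of `∂ₜη(v)` that Fubini needs.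
-/

open MeasureTheory Set Filter Function Topology
open scoped NNReal

lemma LipschitzOnWith.comp_prodMk_right {α β γ : Type*} [PseudoEMetricSpace α]
    [PseudoEMetricSpace β] [PseudoEMetricSpace γ] {f : α × β → γ} {K : ℝ≥0} {s : Set α}
    {t : Set β} (hf : LipschitzOnWith K f (s ×ˢ t)) {b : β} (hb : b ∈ t) :
    LipschitzOnWith K (fun a => f (a, b)) s := by
  simpa [comp_def] using
    hf.comp (LipschitzWith.prodMk_right b).lipschitzOnWith fun _ ha => mk_mem_prod ha hb

lemma LocallyLipschitz.absolutelyContinuousOnInterval {X : Type*} [PseudoMetricSpace X]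
    {g : ℝ → X} (hg : LocallyLipschitz g) (a b : ℝ) : AbsolutelyContinuousOnInterval g a b :=
  (hg.locallyLipschitzOn.exists_lipschitzOnWith_of_compact isCompact_uIcc).choose_spec
    |>.absolutelyContinuousOnInterval

lemma integral_Ioo_eq_intervalIntegral {E : Type*} [NormedAddCommGroup E] [NormedSpace ℝ E]
    {g : ℝ → E} {a b : ℝ} (hab : a ≤ b) : ∫ x in Ioo a b, g x = ∫ x in a..b, g x := by
  rw [intervalIntegral.integral_of_le hab, integral_Ioc_eq_integral_Ioo]

lemma volume_restrict_prod_volume_restrict {α β : Type*} [MeasureSpace α] [MeasureSpace β]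
    [SFinite (volume : Measure α)] [SFinite (volume : Measure β)] (s : Set α) (t : Set β) :
    (volume.restrict s).prod (volume.restrict t) = volume.restrict (s ×ˢ t) := by
  rw [Measure.prod_restrict, ← Measure.volume_eq_prod]

section PartialDeriv

variable {F : Type*} [NormedAddCommGroup F] [NormedSpace ℝ F] {g : ℝ → ℝ → F}

lemma measurable_deriv_fst [CompleteSpace F] [MeasurableSpace F] [BorelSpace F]
    (hg : Continuous (uncurry g)) :
    Measurable fun p : ℝ × ℝ => deriv (fun s => g s p.2) p.1 :=
  (measurable_deriv_with_param (f := fun x s => g s x) (hg.comp continuous_swap)).comp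
    measurable_swap

lemma norm_deriv_fst_le {K : ℝ≥0} {s u : Set ℝ} (hg : LipschitzOnWith K (uncurry g) (s ×ˢ u))
    {t x : ℝ} (ht : s ∈ 𝓝 t) (hx : x ∈ u) : ‖deriv (fun s => g s x) t‖ ≤ K :=
  norm_deriv_le_of_lipschitzOn ht (hg.comp_prodMk_right hx)

end PartialDeriv

section Rectangle

variable {a b c d : ℝ}

lemma Continuous.integrable_prod_restrict_Ioo {F : ℝ × ℝ → ℝ} (hF : Continuous F) :
    Integrable F ((volume.restrict (Ioo a b)).prod (volume.restrict (Ioo c d))) := by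
  rw [volume_restrict_prod_volume_restrict]
  exact (hF.continuousOn.integrableOn_compact (isCompact_Icc.prod isCompact_Icc)).mono_set
    (prod_mono Ioo_subset_Icc_self Ioo_subset_Icc_self)

lemma integrable_deriv_fst_mul {g : ℝ → ℝ → ℝ} (hg : LocallyLipschitz (uncurry g)) {φ : ℝ → ℝ}
    (hφ : Continuous φ) :
    Integrable (fun p : ℝ × ℝ => deriv (fun s => g s p.2) p.1 * φ p.1)
      ((volume.restrict (Ioo a b)).prod (volume.restrict (Ioo c d))) := by
  obtain ⟨K, hK⟩ := hg.locallyLipschitzOn.exists_lipschitzOnWith_of_compact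
    ((isCompact_Icc (a := a) (b := b)).prod (isCompact_Icc (a := c) (b := d)))
  obtain ⟨C, hC⟩ := (isCompact_Icc (a := a) (b := b)).exists_bound_of_continuousOn hφ.continuousOn
  rw [volume_restrict_prod_volume_restrict]
  have hmeas := (measurable_deriv_fst hg.continuous).mul (hφ.measurable.comp measurable_fst)
  refine Measure.integrableOn_of_bounded (M := K * C)
    ((Metric.isBounded_Ioo a b).prod (Metric.isBounded_Ioo c d)).measure_lt_top.ne
    hmeas.aestronglyMeasurable ?_
  filter_upwards [ae_restrict_mem (measurableSet_Ioo.prod measurableSet_Ioo)] with p ⟨ht, hx⟩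
  rw [norm_mul]
  exact mul_le_mul (norm_deriv_fst_le hK (Icc_mem_nhds ht.1 ht.2) (Ioo_subset_Icc_self hx))
    (hC _ (Ioo_subset_Icc_self ht)) (norm_nonneg _) K.coe_nonneg

end Rectangle

section Entropy

variable {E G : Type*} [NormedAddCommGroup E] [NormedSpace ℝ E] [NormedAddCommGroup G]
  [NormedSpace ℝ G] {f : E → E} {η q : E → G}

theorem HasDerivAt.entropyFlux_comp {w : ℝ → E} {x : ℝ} {b : E}
    (hfw : HasDerivAt (fun y => f (w y)) b x) (hw : DifferentiableAt ℝ w x)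
    (hf : DifferentiableAt ℝ f (w x)) (hq : DifferentiableAt ℝ q (w x))
    (hcompat : fderiv ℝ q (w x) = (fderiv ℝ η (w x)).comp (fderiv ℝ f (w x))) :
    HasDerivAt (fun y => q (w y)) (fderiv ℝ η (w x) b) x := by
  have hb : b = fderiv ℝ f (w x) (_root_.deriv w x) :=
    hfw.unique (hf.hasFDerivAt.comp_hasDerivAt x hw.hasDerivAt)
  rw [hb, ← ContinuousLinearMap.comp_apply, ← hcompat]
  exact hq.hasFDerivAt.comp_hasDerivAt x hw.hasDerivAt

theorem fderiv_apply_residual_eq {v : ℝ → ℝ → E} {t x : ℝ} {a b : E}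
    (ha : HasDerivAt (fun s => v s x) a t) (hb : HasDerivAt (fun y => f (v t y)) b x)
    (hvx : DifferentiableAt ℝ (v t) x) (hf : Differentiable ℝ f) (hη : Differentiable ℝ η)
    (hq : Differentiable ℝ q)
    (hcompat : ∀ w, fderiv ℝ q w = (fderiv ℝ η w).comp (fderiv ℝ f w)) :
    fderiv ℝ η (v t x) (a + b) = deriv (fun s => η (v s x)) t + deriv (fun y => q (v t y)) x := by
  rw [map_add]
  congr 1
  · exact ((hη _).hasFDerivAt.comp_hasDerivAt t ha).deriv.symm
  · exact (hb.entropyFlux_comp hvx (hf _) (hq _) (hcompat _)).deriv.symm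

theorem ae_ae_fderiv_apply_residual_eq [FiniteDimensional ℝ E] {μ : Measure ℝ} {s : Set ℝ}
    {L : ℝ≥0} {v : ℝ → ℝ → E} (hv : LipschitzWith L (uncurry v)) (hf : Differentiable ℝ f)
    (hη : Differentiable ℝ η) (hq : Differentiable ℝ q)
    (hcompat : ∀ w, fderiv ℝ q w = (fderiv ℝ η w).comp (fderiv ℝ f w)) {R : ℝ → ℝ → E}
    (hR : ∀ᵐ p ∂μ.prod (volume.restrict s), ∃ a b : E,
      HasDerivAt (fun s => v s p.2) a p.1 ∧ HasDerivAt (fun y => f (v p.1 y)) b p.2 ∧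
        R p.1 p.2 = a + b) :
    ∀ᵐ t ∂μ, ∀ᵐ x ∂volume.restrict s,
      fderiv ℝ η (v t x) (R t x) = deriv (fun s => η (v s x)) t + deriv (fun y => q (v t y)) x := by
  filter_upwards [Measure.ae_ae_of_ae_prod hR] with t ht
  have hvt : ∀ᵐ x, DifferentiableAt ℝ (v t) x :=
    (hv.comp (LipschitzWith.prodMk_left t)).ae_differentiableAt_real
  filter_upwards [ht, ae_restrict_of_ae hvt] with x ⟨a, b, ha, hb, hRab⟩ hvx
  rw [hRab]
  exact fderiv_apply_residual_eq ha hb hvx hf hη hq hcompat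

end Entropy

section Residual

variable {E : Type*} [NormedAddCommGroup E] [NormedSpace ℝ E] [FiniteDimensional ℝ E]
  {T : ℝ} {L : ℝ≥0} {v : ℝ → ℝ → E} {f : E → E} {η q : E → ℝ} {R : ℝ → ℝ → E} {φ : ℝ → ℝ}

theorem integral_fderiv_residual_mul_eq (hv : LipschitzWith L (uncurry v))
    (hv_per : ∀ t x, v t (x + 1) = v t x) (hf : Differentiable ℝ f) (hη : Differentiable ℝ η)
    (hq : ContDiff ℝ 1 q) (hcompat : ∀ w, fderiv ℝ q w = (fderiv ℝ η w).comp (fderiv ℝ f w))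
    (hR : ∀ᵐ p ∂((volume.restrict (Ioo 0 T)).prod (volume.restrict (Ioo (0:ℝ) 1))),
      ∃ a b : E, HasDerivAt (fun s => v s p.2) a p.1 ∧ HasDerivAt (fun y => f (v p.1 y)) b p.2 ∧
        R p.1 p.2 = a + b)
    (hA : Integrable (fun p : ℝ × ℝ => deriv (fun s => η (v s p.2)) p.1 * φ p.1)
      ((volume.restrict (Ioo 0 T)).prod (volume.restrict (Ioo (0:ℝ) 1)))) :
    ∫ t in Ioo 0 T, ∫ x in Ioo (0:ℝ) 1, fderiv ℝ η (v t x) (R t x) * φ t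
      = ∫ t in Ioo 0 T, ∫ x in Ioo (0:ℝ) 1, deriv (fun s => η (v s x)) t * φ t := by
  refine integral_congr_ae ?_
  filter_upwards [ae_ae_fderiv_apply_residual_eq hv hf hη (hq.differentiable one_ne_zero) hcompat
    hR, hA.prod_right_ae] with t hres hAt
  have hqv : AbsolutelyContinuousOnInterval (fun y => q (v t y)) 0 1 :=
    (hq.locallyLipschitz.comp (hv.comp (LipschitzWith.prodMk_left t)).locallyLipschitz)
      |>.absolutelyContinuousOnInterval 0 1
  have hflux : ∫ x in Ioo (0:ℝ) 1, deriv (fun y => q (v t y)) x = 0 := by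
    have hper := hv_per t 0
    rw [zero_add] at hper
    rw [integral_Ioo_eq_intervalIntegral zero_le_one, hqv.integral_deriv_eq_sub, hper, sub_self]
  have hflux_int : IntegrableOn (deriv fun y => q (v t y)) (Ioo 0 1) :=
    hqv.intervalIntegrable_deriv.1.mono_set Ioo_subset_Ioc_self
  calc ∫ x in Ioo (0:ℝ) 1, fderiv ℝ η (v t x) (R t x) * φ t
      = ∫ x in Ioo (0:ℝ) 1,
          (deriv (fun s => η (v s x)) t * φ t + deriv (fun y => q (v t y)) x * φ t) :=
        integral_congr_ae (by filter_upwards [hres] with x hx; rw [hx, add_mul])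
    _ = ∫ x in Ioo (0:ℝ) 1, deriv (fun s => η (v s x)) t * φ t := by
        rw [integral_add hAt (hflux_int.mul_const _), integral_mul_const, integral_mul_const,
          hflux, zero_mul, add_zero]

theorem integral_entropy_residual_eq_zero (hT : 0 ≤ T) (hv : LipschitzWith L (uncurry v))
    (hv_per : ∀ t x, v t (x + 1) = v t x) (hf : Differentiable ℝ f) (hη : ContDiff ℝ 1 η)
    (hq : ContDiff ℝ 1 q) (hcompat : ∀ w, fderiv ℝ q w = (fderiv ℝ η w).comp (fderiv ℝ f w))
    (hR : ∀ᵐ p ∂((volume.restrict (Ioo 0 T)).prod (volume.restrict (Ioo (0:ℝ) 1))),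
      ∃ a b : E, HasDerivAt (fun s => v s p.2) a p.1 ∧ HasDerivAt (fun y => f (v p.1 y)) b p.2 ∧
        R p.1 p.2 = a + b)
    (hφ : ContDiff ℝ 1 φ) (hφT : φ T = 0) :
    (∫ t in Ioo 0 T, ∫ x in Ioo (0:ℝ) 1, η (v t x) * deriv φ t)
      + (∫ t in Ioo 0 T, ∫ x in Ioo (0:ℝ) 1, fderiv ℝ η (v t x) (R t x) * φ t)
      + (∫ x in Ioo (0:ℝ) 1, η (v 0 x) * φ 0) = 0 := by
  have hηv : LocallyLipschitz (uncurry fun t x => η (v t x)) :=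
    hη.locallyLipschitz.comp hv.locallyLipschitz
  have hA : Integrable (fun p : ℝ × ℝ => deriv (fun s => η (v s p.2)) p.1 * φ p.1)
      ((volume.restrict (Ioo 0 T)).prod (volume.restrict (Ioo (0:ℝ) 1))) :=
    integrable_deriv_fst_mul hηv hφ.continuous
  have hB : Integrable (fun p : ℝ × ℝ => η (v p.1 p.2) * deriv φ p.1)
      ((volume.restrict (Ioo 0 T)).prod (volume.restrict (Ioo (0:ℝ) 1))) :=
    (hηv.continuous.mul ((hφ.continuous_deriv le_rfl).comp continuous_fst))
      |>.integrable_prod_restrict_Ioo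
  have htime : ∀ x, ∫ t in Ioo 0 T, (deriv (fun s => η (v s x)) t * φ t + η (v t x) * deriv φ t)
      = -(η (v 0 x) * φ 0) := fun x => by
    have hηx : AbsolutelyContinuousOnInterval (fun s => η (v s x)) 0 T :=
      (hηv.comp (LipschitzWith.prodMk_right x).locallyLipschitz).absolutelyContinuousOnInterval 0 T
    rw [integral_Ioo_eq_intervalIntegral hT, hηx.integral_deriv_mul_eq_sub
      hφ.contDiffOn.absolutelyContinuousOnInterval, hφT, mul_zero, zero_sub]
  rw [integral_fderiv_residual_mul_eq hv hv_per hf (hη.differentiable one_ne_zero) hq hcompat hR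
    hA, add_comm (∫ t in Ioo 0 T, _), ← integral_integral_add hA hB,
    integral_integral_swap (hA.add hB)]
  simp only [htime, integral_neg, neg_add_cancel]

end Residual

/-- Let `D` be the interval `(0,1)` with periodic boundary conditions, let
`v : [0,T]×D → ℝ^m` be Lipschitz (encoded as a function on `ℝ×ℝ`, `1`-periodic in space,
Lipschitz on `[0,T]×ℝ`), let `f ∈ C¹(ℝ^m;ℝ^m)`, let `(η,q)` be a `C¹` entropy/entropy-flux
pair (`Dq = Dη·Df`) and let `R = ∂_t v + ∂_x f(v)` be the a.e.-defined residual.  Then for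
every `φ ∈ C^∞([0,T);ℝ)` with compact support in `[0,T)`:

`∫_0^T ∫_D η(v) φ'(t) dx dt + ∫_0^T ∫_D (Dη(v)·R) φ(t) dx dt + ∫_D η(v(0,x)) φ(0) dx = 0`. -/
theorem stmt13 {m : ℕ} {T : ℝ} (hT : 0 < T) (Lv : NNReal)
    (v : ℝ → ℝ → EuclideanSpace ℝ (Fin m))
    (hv_lip : LipschitzOnWith Lv (fun p : ℝ × ℝ => v p.1 p.2) (Icc 0 T ×ˢ univ))
    (hv_per : ∀ t x, v t (x + 1) = v t x)
    (f : EuclideanSpace ℝ (Fin m) → EuclideanSpace ℝ (Fin m)) (hf : ContDiff ℝ 1 f)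
    (η q : EuclideanSpace ℝ (Fin m) → ℝ) (hη : ContDiff ℝ 1 η) (hq : ContDiff ℝ 1 q)
    (hcompat : ∀ w, fderiv ℝ q w = (fderiv ℝ η w).comp (fderiv ℝ f w))
    (R : ℝ → ℝ → EuclideanSpace ℝ (Fin m))
    (hR : ∀ᵐ p ∂((volume.restrict (Ioo 0 T)).prod (volume.restrict (Ioo (0:ℝ) 1))),
      ∃ a b : EuclideanSpace ℝ (Fin m),
        HasDerivAt (fun s => v s p.2) a p.1 ∧
        HasDerivAt (fun y => f (v p.1 y)) b p.2 ∧
        R p.1 p.2 = a + b) :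
    ∀ φ : ℝ → ℝ,
      ContDiff ℝ (⊤:ℕ∞) φ →
      (∃ t₀ < T, ∀ t, t₀ ≤ t → φ t = 0) →
      (∫ t in Ioo 0 T, ∫ x in Ioo (0:ℝ) 1, η (v t x) * deriv φ t)
        + (∫ t in Ioo 0 T, ∫ x in Ioo (0:ℝ) 1, fderiv ℝ η (v t x) (R t x) * φ t)
        + (∫ x in Ioo (0:ℝ) 1, η (v 0 x) * φ 0) = 0 := by
  rintro φ hφ ⟨t₀, ht₀, hφ_supp⟩
  set V : ℝ → ℝ → EuclideanSpace ℝ (Fin m) := fun t => v (projIcc 0 T hT.le t)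
  have hVv : ∀ t ∈ Icc 0 T, V t = v t := fun t ht => by simp [V, projIcc_of_mem _ ht]
  have hproj : LipschitzWith 1 fun p : ℝ × ℝ => ((projIcc 0 T hT.le p.1 : ℝ), p.2) := by
    simpa using (((LipschitzWith.subtype_val _).comp (LipschitzWith.projIcc hT.le)).comp
      LipschitzWith.prod_fst).prodMk (LipschitzWith.prod_snd (α := ℝ) (β := ℝ))
  have hV : LipschitzWith (Lv * 1) (uncurry V) := by
    have h := hv_lip.comp hproj.lipschitzOnWith (s := univ) fun p _ => ⟨Subtype.prop _, mem_univ _⟩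
    rwa [lipschitzOnWith_univ] at h
  have hVR : ∀ᵐ p ∂((volume.restrict (Ioo 0 T)).prod (volume.restrict (Ioo (0:ℝ) 1))),
      ∃ a b : EuclideanSpace ℝ (Fin m), HasDerivAt (fun s => V s p.2) a p.1 ∧
        HasDerivAt (fun y => f (V p.1 y)) b p.2 ∧ R p.1 p.2 = a + b := by
    filter_upwards [hR, Measure.quasiMeasurePreserving_fst.ae (ae_restrict_mem measurableSet_Ioo)]
      with p ⟨a, b, ha, hb, hRab⟩ hp
    refine ⟨a, b, ha.congr_of_eventuallyEq ?_, by rwa [hVv p.1 (Ioo_subset_Icc_self hp)], hRab⟩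
    filter_upwards [Ioo_mem_nhds hp.1 hp.2] with s hs
    rw [hVv s (Ioo_subset_Icc_self hs)]
  have key := integral_entropy_residual_eq_zero hT.le hV (fun t x => hv_per _ x)
    (hf.differentiable one_ne_zero) hη hq hcompat hVR (hφ.of_le (mod_cast le_top))
    (hφ_supp T ht₀.le)
  convert key using 3
  iterate 2
    exact setIntegral_congr_fun measurableSet_Ioo fun t ht => by
      rw [hVv t (Ioo_subset_Icc_self ht)]
  rw [hVv 0 (left_mem_Icc.2 hT.le)]
end

section
/- Let u : (0,1) → ℝ be given by u(x) = x^{1/2}, and for ε ∈ (0,1/4) define u^ε : (0,1) → ℝ by u^ε(x) = x^{1 − ε/2} for x ∈ (0,ε) and u^ε(x) = x^{1/2} for x ∈ [ε,1). Then for every ε ∈ (0,1/4): (i) ‖u^ε − u‖_{L^∞((0,1))} ≤ ε^{1/2}; (ii) ∫_0^1 u^ε(x)^{-1} dx < ∞; and (iii) ∫_0^1 u^ε(x)^{-1} dx ≥ 1/ε. Consequently, ∫_0^1 u^ε(x)^{-1} dx → +∞ while ‖u^ε − u‖_{L^∞((0,1))} → 0 as ε → 0⁺; hence the map E(v) :=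 ∫_0^1 1/v(x) dx, restricted to the set { v ∈ L^∞((0,1)) : v > 0 a.e., ∫_0^1 1/v < ∞ }, is not continuous at u with respect to the L^∞ norm. -/
open MeasureTheory Filter Topology Set
open scoped ENNReal

/-!
On `(0, ε)` the perturbation replaces `x^{1/2}` by `x^{1-ε/2}`, which lies below `x^{1/2} ≤ ε^{1/2}`,
so the two functions are `ε^{1/2}`-close in `L^∞`. Its reciprocal `x^{ε/2-1}` is integrable but has
integral `2 ε^{ε/2} / ε ≥ 1/ε` over `(0, ε)`, because `ε^{ε/2} ≥ 1/2`. Hence `E(u^ε) → ∞` along a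
family that tends to `u` in `L^∞`, which rules out continuity of `E` at `u`.
-/

lemma Real.one_half_le_rpow_self_half {ε : ℝ} (hε : 0 < ε) : 1 / 2 ≤ ε ^ (ε / 2) := by
  have hlog : ε - 1 ≤ ε * Real.log ε := by
    have := Real.one_sub_inv_le_log_of_pos hε
    rwa [← mul_le_mul_iff_of_pos_left hε, mul_sub, mul_inv_cancel₀ hε.ne', mul_one] at this
  rw [Real.rpow_def_of_pos hε]
  linarith [Real.add_one_le_exp (Real.log ε * (ε / 2))]

lemma not_forall_abs_sub_lt_of_tendsto_atTop {α ι : Type*} {l : Filter ι} [l.NeBot]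
    {P : α → Prop} {d : α → ℝ≥0∞} {E : α → ℝ} {v : ι → α} (c : ℝ)
    (hP : ∀ᶠ i in l, P (v i)) (hd : Tendsto (fun i ↦ d (v i)) l (𝓝 0))
    (hE : Tendsto (fun i ↦ E (v i)) l atTop) :
    ¬ ∀ δ : ℝ, 0 < δ → ∃ ρ : ℝ, 0 < ρ ∧ ∀ w, P w → d w < ENNReal.ofReal ρ → |E w - c| < δ := by
  intro hcont
  obtain ⟨ρ, hρ, hclose⟩ := hcont 1 one_pos
  obtain ⟨i, hPi, hdi, hEi⟩ := (hP.and ((hd.eventually_lt_const (ENNReal.ofReal_pos.2 hρ)).and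
    (hE.eventually_ge_atTop (c + 1)))).exists
  linarith [(abs_lt.1 (hclose (v i) hPi hdi)).2]

-- The domain of `E v = ∫₀¹ 1/v` on which continuity is tested.
def IsAdmissible (v : ℝ → ℝ) : Prop :=
  Measurable v ∧ (∀ᵐ x ∂volume.restrict (Ioo (0:ℝ) 1), 0 < v x) ∧
    eLpNorm v ⊤ (volume.restrict (Ioo (0:ℝ) 1)) < ⊤ ∧
    (∫⁻ x in Ioo (0:ℝ) 1, ENNReal.ofReal (1 / v x)) < ⊤

noncomputable def perturbedSqrt (ε x : ℝ) : ℝ :=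
  if x ∈ Ioo (0:ℝ) ε then x ^ ((1:ℝ) - ε/2) else x ^ ((1:ℝ)/2)

namespace perturbedSqrt

variable {ε x : ℝ}

lemma measurable (ε : ℝ) : Measurable (perturbedSqrt ε) :=
  Measurable.ite measurableSet_Ioo (by fun_prop) (by fun_prop)

lemma pos (hx : 0 < x) : 0 < perturbedSqrt ε x := by
  unfold perturbedSqrt; split <;> exact Real.rpow_pos_of_pos hx _

lemma le_one (hε : ε ≤ 2) (hx : x ∈ Ioo (0:ℝ) 1) : perturbedSqrt ε x ≤ 1 := by
  unfold perturbedSqrt; split <;> exact Real.rpow_le_one hx.1.le hx.2.le (by linarith)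

lemma one_div_of_mem_Ioo (hx : x ∈ Ioo 0 ε) : 1 / perturbedSqrt ε x = x ^ (ε/2 - 1) := by
  rw [perturbedSqrt, if_pos hx, one_div, ← Real.rpow_neg hx.1.le]
  ring_nf

lemma one_div_le (hε : ε ≤ 1) (hx : x ∈ Ioo (0:ℝ) 1) : 1 / perturbedSqrt ε x ≤ x ^ (ε/2 - 1) := by
  by_cases hxε : x ∈ Ioo 0 ε
  · exact (one_div_of_mem_Ioo hxε).le
  · rw [perturbedSqrt, if_neg hxε, one_div, ← Real.rpow_neg hx.1.le]
    exact Real.rpow_le_rpow_of_exponent_ge hx.1 hx.2.le (by linarith)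

lemma integrableOn_one_div (hε : 0 < ε) (hε1 : ε ≤ 1) :
    IntegrableOn (fun x ↦ 1 / perturbedSqrt ε x) (Ioo 0 1) := by
  have hdom : IntegrableOn (fun x : ℝ ↦ x ^ (ε/2 - 1)) (Ioo 0 1) :=
    (intervalIntegral.integrableOn_Ioo_rpow_iff one_pos).2 (by linarith)
  refine hdom.mono' ((measurable ε).const_div 1).aestronglyMeasurable ?_
  refine (ae_restrict_iff' measurableSet_Ioo).2 (Eventually.of_forall fun x hx ↦ ?_)
  rw [Real.norm_of_nonneg (one_div_pos.2 (pos hx.1)).le]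
  exact one_div_le hε1 hx

lemma eLpNorm_top_lt_top (hε : ε ≤ 2) :
    eLpNorm (perturbedSqrt ε) ⊤ (volume.restrict (Ioo (0:ℝ) 1)) < ⊤ := by
  refine lt_of_le_of_lt (eLpNormEssSup_le_of_ae_bound (C := 1) ?_) ENNReal.ofReal_lt_top
  refine (ae_restrict_iff' measurableSet_Ioo).2 (Eventually.of_forall fun x hx ↦ ?_)
  rw [Real.norm_of_nonneg (pos hx.1).le]
  exact le_one hε hx

lemma eLpNorm_top_sub_sqrt_le (hε : 0 ≤ ε) (hε1 : ε ≤ 1) :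
    eLpNorm (fun x ↦ perturbedSqrt ε x - x ^ ((1:ℝ)/2)) ⊤ (volume.restrict (Ioo (0:ℝ) 1))
      ≤ ENNReal.ofReal (ε ^ ((1:ℝ)/2)) := by
  refine eLpNormEssSup_le_of_ae_bound ?_
  refine (ae_restrict_iff' measurableSet_Ioo).2 (Eventually.of_forall fun x hx ↦ ?_)
  by_cases hxε : x ∈ Ioo 0 ε
  · have hlow : x ^ ((1:ℝ) - ε/2) ≤ x ^ ((1:ℝ)/2) :=
      Real.rpow_le_rpow_of_exponent_ge hx.1 hx.2.le (by linarith)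
    have hsqrt : x ^ ((1:ℝ)/2) ≤ ε ^ ((1:ℝ)/2) :=
      Real.rpow_le_rpow hx.1.le hxε.2.le (by norm_num)
    have hnonneg : 0 ≤ x ^ ((1:ℝ) - ε/2) := Real.rpow_nonneg hx.1.le _
    rw [perturbedSqrt, if_pos hxε, Real.norm_eq_abs, abs_of_nonpos (by linarith)]
    linarith
  · rw [perturbedSqrt, if_neg hxε, sub_self, norm_zero]
    exact Real.rpow_nonneg hε _

lemma one_div_le_setIntegral_one_div (hε : 0 < ε) (hε1 : ε ≤ 1) :
    1 / ε ≤ ∫ x in Ioo (0:ℝ) 1, 1 / perturbedSqrt ε x := by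
  have hnear : ∫ x in Ioo 0 ε, 1 / perturbedSqrt ε x = ε ^ (ε/2) / (ε/2) := by
    rw [setIntegral_congr_fun measurableSet_Ioo fun x hx ↦ one_div_of_mem_Ioo hx,
      ← integral_Ioc_eq_integral_Ioo, ← intervalIntegral.integral_of_le hε.le,
      integral_rpow (Or.inl (by linarith)), Real.zero_rpow (by linarith)]
    ring_nf
  have hmono : ∫ x in Ioo 0 ε, 1 / perturbedSqrt ε x ≤ ∫ x in Ioo (0:ℝ) 1, 1 / perturbedSqrt ε x :=
    setIntegral_mono_set (integrableOn_one_div hε hε1)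
      ((ae_restrict_iff' measurableSet_Ioo).2 (Eventually.of_forall fun x hx ↦
        (one_div_pos.2 (pos hx.1)).le))
      (Ioo_subset_Ioo_right hε1).eventuallyLE
  have hlower : 1 / ε ≤ ε ^ (ε/2) / (ε/2) := by
    rw [div_le_div_iff₀ hε (by positivity)]
    nlinarith [Real.one_half_le_rpow_self_half hε]
  linarith

lemma isAdmissible (hε : 0 < ε) (hε1 : ε ≤ 1) : IsAdmissible (perturbedSqrt ε) :=
  ⟨measurable ε, (ae_restrict_iff' measurableSet_Ioo).2 (Eventually.of_forall fun _ hx ↦ pos hx.1),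
    eLpNorm_top_lt_top (by linarith), (integrableOn_one_div hε hε1).setLIntegral_lt_top⟩

lemma eventually_mem_Ioc : ∀ᶠ ε in 𝓝[>] (0:ℝ), ε ∈ Ioc 0 1 :=
  mem_of_superset (Ioo_mem_nhdsGT one_pos) Ioo_subset_Ioc_self

lemma tendsto_setIntegral_one_div_atTop :
    Tendsto (fun ε ↦ ∫ x in Ioo (0:ℝ) 1, 1 / perturbedSqrt ε x) (𝓝[>] 0) atTop :=
  tendsto_atTop_mono' _ (eventually_mem_Ioc.mono fun _ hε ↦ one_div_le_setIntegral_one_div hε.1 hε.2)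
    (tendsto_inv_nhdsGT_zero.congr fun ε ↦ (one_div ε).symm)

lemma tendsto_eLpNorm_top_sub_sqrt :
    Tendsto (fun ε ↦ eLpNorm (fun x ↦ perturbedSqrt ε x - x ^ ((1:ℝ)/2)) ⊤
      (volume.restrict (Ioo (0:ℝ) 1))) (𝓝[>] 0) (𝓝 0) := by
  have hbound : Tendsto (fun ε : ℝ ↦ ENNReal.ofReal (ε ^ ((1:ℝ)/2))) (𝓝 0) (𝓝 0) := by
    have h := ENNReal.tendsto_ofReal
      (Real.continuousAt_rpow_const (0:ℝ) ((1:ℝ)/2) (Or.inr (by norm_num))).tendsto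
    rwa [Real.zero_rpow (by norm_num), ENNReal.ofReal_zero] at h
  exact tendsto_of_tendsto_of_tendsto_of_le_of_le' tendsto_const_nhds
    (hbound.mono_left nhdsWithin_le_nhds) (Eventually.of_forall fun _ ↦ zero_le)
    (eventually_mem_Ioc.mono fun _ hε ↦ eLpNorm_top_sub_sqrt_le hε.1.le hε.2)

end perturbedSqrt

/-- With `u(x) = x^{1/2}` and, for `ε ∈ (0,1/4)`,
`u^ε(x) = x^{1−ε/2}` on `(0,ε)` and `u^ε(x) = x^{1/2}` on `[ε,1)`, one has
(i) `‖u^ε − u‖_{L^∞((0,1))} ≤ ε^{1/2}`, (ii) `∫_0^1 (u^ε)⁻¹ < ∞`,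
(iii) `∫_0^1 (u^ε)⁻¹ ≥ 1/ε`; consequently `∫_0^1 (u^ε)⁻¹ → +∞` while
`‖u^ε − u‖_{L^∞} → 0` as `ε → 0⁺`, and hence `E(v) = ∫_0^1 1/v`, restricted to the
a.e.-positive essentially bounded functions with `∫ 1/v < ∞`, is not continuous at `u`
with respect to the `L^∞` norm. -/
theorem stmt15
    (u : ℝ → ℝ) (hu : u = fun x => x ^ ((1:ℝ)/2))
    (uε : ℝ → ℝ → ℝ)
    (huε : ∀ ε ∈ Set.Ioo (0:ℝ) (1/4), ∀ x : ℝ,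
      uε ε x = if x ∈ Set.Ioo (0:ℝ) ε then x ^ ((1:ℝ) - ε/2) else x ^ ((1:ℝ)/2)) :
    (∀ ε ∈ Set.Ioo (0:ℝ) (1/4),
      eLpNorm (fun x => uε ε x - u x) ⊤ (volume.restrict (Set.Ioo (0:ℝ) 1))
          ≤ ENNReal.ofReal (ε ^ ((1:ℝ)/2)) ∧
      (∫⁻ x in Set.Ioo (0:ℝ) 1, ENNReal.ofReal (1 / uε ε x)) < ⊤ ∧
      (1 / ε) ≤ ∫ x in Set.Ioo (0:ℝ) 1, 1 / uε ε x) ∧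
    Filter.Tendsto (fun ε => ∫ x in Set.Ioo (0:ℝ) 1, 1 / uε ε x)
      (nhdsWithin 0 (Set.Ioo (0:ℝ) (1/4))) Filter.atTop ∧
    Filter.Tendsto
      (fun ε => eLpNorm (fun x => uε ε x - u x) ⊤ (volume.restrict (Set.Ioo (0:ℝ) 1)))
      (nhdsWithin 0 (Set.Ioo (0:ℝ) (1/4))) (nhds 0) ∧
    ¬ (∀ δ : ℝ, 0 < δ → ∃ ρ : ℝ, 0 < ρ ∧
        ∀ v : ℝ → ℝ, Measurable v →
          (∀ᵐ x ∂volume.restrict (Set.Ioo (0:ℝ) 1), 0 < v x) →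
          eLpNorm v ⊤ (volume.restrict (Set.Ioo (0:ℝ) 1)) < ⊤ →
          (∫⁻ x in Set.Ioo (0:ℝ) 1, ENNReal.ofReal (1 / v x)) < ⊤ →
          eLpNorm (fun x => v x - u x) ⊤ (volume.restrict (Set.Ioo (0:ℝ) 1))
              < ENNReal.ofReal ρ →
          |(∫ x in Set.Ioo (0:ℝ) 1, 1 / v x) - ∫ x in Set.Ioo (0:ℝ) 1, 1 / u x| < δ) := by
  subst hu
  have hfam : ∀ ε ∈ Ioo (0:ℝ) (1/4), uε ε = perturbedSqrt ε := fun ε hε ↦ funext (huε ε hε)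
  have hfam' : ∀ᶠ ε in 𝓝[Ioo (0:ℝ) (1/4)] 0, uε ε = perturbedSqrt ε :=
    eventually_nhdsWithin_of_forall hfam
  have hle : 𝓝[Ioo (0:ℝ) (1/4)] 0 ≤ 𝓝[>] 0 := nhdsWithin_mono _ Ioo_subset_Ioi_self
  have hdiverge : Tendsto (fun ε ↦ ∫ x in Ioo (0:ℝ) 1, 1 / uε ε x) (𝓝[Ioo (0:ℝ) (1/4)] 0) atTop :=
    (perturbedSqrt.tendsto_setIntegral_one_div_atTop.mono_left hle).congr'
      (hfam'.mono fun ε h ↦ by simp only [h])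
  have hconverge : Tendsto
      (fun ε ↦ eLpNorm (fun x ↦ uε ε x - x ^ ((1:ℝ)/2)) ⊤ (volume.restrict (Ioo (0:ℝ) 1)))
      (𝓝[Ioo (0:ℝ) (1/4)] 0) (𝓝 0) :=
    (perturbedSqrt.tendsto_eLpNorm_top_sub_sqrt.mono_left hle).congr'
      (hfam'.mono fun ε h ↦ by simp only [h])
  have : (𝓝[Ioo (0:ℝ) (1/4)] 0).NeBot := left_nhdsWithin_Ioo_neBot (by norm_num)
  refine ⟨fun ε hε ↦ ?_, hdiverge, hconverge, fun hcont ↦ ?_⟩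
  · have hε1 : ε ≤ 1 := by linarith [hε.2]
    rw [hfam ε hε]
    exact ⟨perturbedSqrt.eLpNorm_top_sub_sqrt_le hε.1.le hε1,
      (perturbedSqrt.integrableOn_one_div hε.1 hε1).setLIntegral_lt_top,
      perturbedSqrt.one_div_le_setIntegral_one_div hε.1 hε1⟩
  refine not_forall_abs_sub_lt_of_tendsto_atTop (P := IsAdmissible)
    (d := fun v ↦ eLpNorm (fun x ↦ v x - x ^ ((1:ℝ)/2)) ⊤ (volume.restrict (Ioo (0:ℝ) 1)))
    (E := fun v ↦ ∫ x in Ioo (0:ℝ) 1, 1 / v x) (∫ x in Ioo (0:ℝ) 1, 1 / x ^ ((1:ℝ)/2))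
    ?_ hconverge hdiverge fun δ hδ ↦ ?_
  · exact eventually_nhdsWithin_of_forall fun ε hε ↦
      hfam ε hε ▸ perturbedSqrt.isAdmissible hε.1 (by linarith [hε.2])
  · obtain ⟨ρ, hρ, hclose⟩ := hcont δ hδ
    exact ⟨ρ, hρ, fun v ⟨hv, hpos, hbdd, hfin⟩ ↦ hclose v hv hpos hbdd hfin⟩
end
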